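/- arXiv:1101.1822 — 2 statements merged into one kernel-verified Lean document; each statement's English description precedes it below -/
import Mathlib

section
/- Suppose the stationary chain (X_n,Y_n)_{n∈ℤ} is absolutely regular, that is, ∫ ‖𝐏^{z,w}((X_n,Y_n)∈·) − π‖_TV π(dz,dw) → 0 as n→∞. Then both the marginal ergodicity assumption and the reversed marginal ergodicity assumption hold. -/
open MeasureTheory ProbabilityTheory Filter Set
open scoped ENNReal

noncomputable section

/-- The total variation distance between two (finite) measures. -/
def tvDist {α : Type*} [MeasurableSpace α] (μ ν : Measure α) : ℝ :=
  ⨆ A : { s : Set α // MeasurableSet s }, |(μ A.1).toReal - (ν A.1).toReal|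

/-- The product of two measures, written via `bind` so that no side conditions are needed. -/
def measProd {α β : Type*} [MeasurableSpace α] [MeasurableSpace β]
    (μ : Measure α) (ν : Measure β) : Measure (α × β) :=
  μ.bind fun a => ν.map (Prod.mk a)

/-- Iterates of a Markov transition kernel. -/
def kpow {α : Type*} [MeasurableSpace α] (κ : Kernel α α) : ℕ → Kernel α α
  | 0 => Kernel.id
  | n + 1 => (kpow κ n) ∘ₖ κ

/-- The canonical two-sided path space of the bivariate chain. -/
abbrev PathSp (E F : Type*) := (ℤ → E) × (ℤ → F)

section Setup

variable {E F : Type*} [MeasurableSpace E] [MeasurableSpace F]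

/-- The unobserved coordinate process. -/
def Xp (n : ℤ) (ω : PathSp E F) : E := ω.1 n

/-- The observed coordinate process. -/
def Yp (n : ℤ) (ω : PathSp E F) : F := ω.2 n

/-- The joint coordinate process. -/
def XYp (n : ℤ) (ω : PathSp E F) : E × F := (ω.1 n, ω.2 n)

/-- The canonical shift on path space. -/
def pathShift (ω : PathSp E F) : PathSp E F := (fun n => ω.1 (n + 1), fun n => ω.2 (n + 1))

/-- The shift on the observation path space. -/
def shiftObs (n : ℤ) (y : ℤ → F) : ℤ → F := fun k => y (k + n)

/-- `𝓕X I = σ{X_k : k ∈ I}`. -/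
def sigX (I : Set ℤ) : MeasurableSpace (PathSp E F) :=
  ⨆ k ∈ I, MeasurableSpace.comap (fun ω : PathSp E F => ω.1 k) inferInstance

/-- `𝓕Y I = σ{Y_k : k ∈ I}`. -/
def sigY (I : Set ℤ) : MeasurableSpace (PathSp E F) :=
  ⨆ k ∈ I, MeasurableSpace.comap (fun ω : PathSp E F => ω.2 k) inferInstance

/-- `σ{Y_k : k ≥ 0}` on the observation path space `F^ℤ`. -/
def sigObsPlus (F : Type*) [MeasurableSpace F] : MeasurableSpace (ℤ → F) :=
  ⨆ k ∈ Ici (0 : ℤ), MeasurableSpace.comap (fun y : ℤ → F => y k) inferInstance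

/-- Two-sided Markov property of a path-space law with one-step kernel `P`. -/
def TwoSidedMarkov (Plaw : Measure (PathSp E F)) (P : Kernel (E × F) (E × F)) : Prop :=
  ∀ (n : ℤ) (A : Set (E × F)), MeasurableSet A →
    ∀ S : Set (PathSp E F), MeasurableSet[sigX (Iic n) ⊔ sigY (Iic n)] S →
      Plaw (S ∩ XYp (n + 1) ⁻¹' A) = ∫⁻ ω in S, P (XYp n ω) A ∂Plaw

/-- Markov property of the forward chain `(X_n,Y_n)_{n ≥ m₀}`. -/
def FwdMarkovFrom (m₀ : ℤ) (μ : Measure (PathSp E F)) (P : Kernel (E × F) (E × F)) : Prop :=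
  ∀ n : ℤ, m₀ ≤ n → ∀ A : Set (E × F), MeasurableSet A →
    ∀ S : Set (PathSp E F), MeasurableSet[sigX (Icc m₀ n) ⊔ sigY (Icc m₀ n)] S →
      μ (S ∩ XYp (n + 1) ⁻¹' A) = ∫⁻ ω in S, P (XYp n ω) A ∂μ

/-- Markov property of the backward chain `(X_{-n},Y_{-n})_{n ≥ -m₀}` with kernel `P'`. -/
def BwdMarkovFrom (m₀ : ℤ) (μ : Measure (PathSp E F)) (P' : Kernel (E × F) (E × F)) : Prop :=
  ∀ n : ℤ, n ≤ m₀ → ∀ A : Set (E × F), MeasurableSet A →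
    ∀ S : Set (PathSp E F), MeasurableSet[sigX (Icc n m₀) ⊔ sigY (Icc n m₀)] S →
      μ (S ∩ XYp (n - 1) ⁻¹' A) = ∫⁻ ω in S, P' (XYp n ω) A ∂μ

/-- The canonical setup of the paper: `Plaw` is the law of the two-sided stationary Markov chain
`(X_n,Y_n)_{n∈ℤ}` with transition kernel `P` and stationary distribution `π`; `P'` is a version
of the reversed transition kernel; and `K (z,w) = Plaw^{z,w}` is the regular conditional
probability `Plaw( · | X_0 = z, Y_0 = w)`, under which the forward chain is Markov with kernel `P`
started at `(z,w)`, the backward chain is Markov with kernel `P'` started at `(z,w)`, and the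
forward and backward chains are independent. -/
structure CanonicalSetup (P P' : Kernel (E × F) (E × F)) (π : Measure (E × F))
    (Plaw : Measure (PathSp E F)) (K : Kernel (E × F) (PathSp E F)) : Prop where
  prob : IsProbabilityMeasure Plaw
  stationary : Plaw.map pathShift = Plaw
  marginal : Plaw.map (XYp 0) = π
  markov : TwoSidedMarkov Plaw P
  rev : ∀ A B : Set (E × F), MeasurableSet A → MeasurableSet B →
    ∫⁻ p in B, P' p A ∂π = ∫⁻ p in A, P p B ∂π
  disint : π.bind (fun p => K p) = Plaw
  start : ∀ p : E × F, K p {ω | XYp 0 ω = p} = 1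
  fwd : ∀ p : E × F, FwdMarkovFrom 0 (K p) P
  bwd : ∀ p : E × F, BwdMarkovFrom 0 (K p) P'
  indep : ∀ p : E × F,
    ProbabilityTheory.Indep (sigX (Ici 0) ⊔ sigY (Ici 0)) (sigX (Iic 0) ⊔ sigY (Iic 0)) (K p)

/-- Assumption (nondegeneracy): `P(z,w,dz',dw') = g(z,w,z',w') P₀(z,dz') Q(w,dw')` for a
strictly positive finite measurable density `g`. -/
structure Nondeg (P : Kernel (E × F) (E × F)) (P₀ : Kernel E E) (Q : Kernel F F)
    (g : E → F → E → F → ℝ≥0∞) : Prop where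
  markovP₀ : IsMarkovKernel P₀
  markovQ : IsMarkovKernel Q
  meas : Measurable fun q : (E × F) × E × F => g q.1.1 q.1.2 q.2.1 q.2.2
  pos : ∀ z w z' w', 0 < g z w z' w'
  fin : ∀ z w z' w', g z w z' w' < ⊤
  eq : ∀ p : E × F, P p = (measProd (P₀ p.1) (Q p.2)).withDensity fun q => g p.1 p.2 q.1 q.2

/-- Assumption (marginal ergodicity):
`∫ ‖Plaw^{z,w}(X_n ∈ ·) − Plaw(X_n ∈ ·)‖_TV π(dz,dw) → 0`. -/
def MarginalErgodic (π : Measure (E × F)) (Plaw : Measure (PathSp E F))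
    (K : Kernel (E × F) (PathSp E F)) : Prop :=
  Tendsto (fun n : ℕ =>
      ∫ p, tvDist ((K p).map (Xp (n : ℤ))) (Plaw.map (Xp (n : ℤ))) ∂π) atTop (nhds 0)

/-- Assumption (reversed marginal ergodicity):
`∫ ‖Plaw^{z,w}(X_{-n} ∈ ·) − Plaw(X_{-n} ∈ ·)‖_TV π(dz,dw) → 0`. -/
def RevMarginalErgodic (π : Measure (E × F)) (Plaw : Measure (PathSp E F))
    (K : Kernel (E × F) (PathSp E F)) : Prop :=
  Tendsto (fun n : ℕ =>
      ∫ p, tvDist ((K p).map (Xp (-(n : ℤ)))) (Plaw.map (Xp (-(n : ℤ)))) ∂π) atTop (nhds 0)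

/-- `m₁ = m₂` modulo `Plaw`-null sets (one inclusion: every `m₁`-set differs from an `m₂`-set by a
`Plaw`-null set). -/
def EqModNull (Plaw : Measure (PathSp E F)) (m₁ m₂ : MeasurableSpace (PathSp E F)) : Prop :=
  ∀ A : Set (PathSp E F), MeasurableSet[m₁] A →
    ∃ B : Set (PathSp E F), MeasurableSet[m₂] B ∧ Plaw ((A \ B) ∪ (B \ A)) = 0

end Setup

section More

variable {E F : Type*} [MeasurableSpace E] [MeasurableSpace F]

/-- `Pi` is a version of the nonlinear filter for the path-space law `mu`:
`Pi n` is a version of the regular conditional probability `mu(X_n ∈ · | Y_0,…,Y_n)`. -/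
def IsFilterOf (mu : Measure (PathSp E F)) (Pi : ℕ → PathSp E F → Measure E) : Prop :=
  ∀ n : ℕ,
    (∀ ω, IsProbabilityMeasure (Pi n ω)) ∧
    ∀ A : Set E, MeasurableSet A →
      Measurable[sigY (Icc 0 (n : ℤ))] (fun ω => Pi n ω A) ∧
      ∀ S : Set (PathSp E F), MeasurableSet[sigY (Icc 0 (n : ℤ))] S →
        ∫⁻ ω in S, Pi n ω A ∂mu = mu (S ∩ Xp (n : ℤ) ⁻¹' A)

/-- `κ` is a version of the regular conditional distribution of `X_n` given `Y_0`
under the path-space law `mu`. -/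
def IsCondLawX0 (mu : Measure (PathSp E F)) (n : ℕ) (κ : F → Measure E) : Prop :=
  (∀ w, IsProbabilityMeasure (κ w)) ∧
  ∀ A : Set E, MeasurableSet A →
    Measurable (fun w => κ w A) ∧
    ∀ B : Set F, MeasurableSet B →
      ∫⁻ w in B, κ w A ∂(mu.map (Yp 0)) = mu (Yp 0 ⁻¹' B ∩ Xp (n : ℤ) ⁻¹' A)

/-- `πX` is a version of the regular conditional probability `𝐏(Y_0 ∈ · | X_0)`,
equivalently a disintegration of `π` over its first marginal. -/
def IsCondYgivenX (π : Measure (E × F)) (πX : E → Measure F) : Prop :=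
  (∀ z, IsProbabilityMeasure (πX z)) ∧
  ∀ B : Set F, MeasurableSet B →
    Measurable (fun z => πX z B) ∧
    ∀ A : Set E, MeasurableSet A →
      ∫⁻ z in A, πX z B ∂(π.map Prod.fst) = π (A ×ˢ B)

/-- `πY` is a version of the regular conditional probability `𝐏(X_0 ∈ · | Y_0)`,
equivalently a disintegration of `π` over its second marginal. -/
def IsCondXgivenY (π : Measure (E × F)) (πY : F → Measure E) : Prop :=
  (∀ w, IsProbabilityMeasure (πY w)) ∧
  ∀ A : Set E, MeasurableSet A →
    Measurable (fun w => πY w A) ∧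
    ∀ B : Set F, MeasurableSet B →
      ∫⁻ w in B, πY w A ∂(π.map Prod.snd) = π (A ×ˢ B)

/-- `P_n^X(z,A) = ∫ P^n(z,w,A×F) π^X(z,dw)`, as a measure on `E`. -/
def PnX (P : Kernel (E × F) (E × F)) (πX : E → Measure F) (n : ℕ) (z : E) : Measure E :=
  ((πX z).bind fun w => (kpow P n) (z, w)).map Prod.fst

/-- `P_n^Y(w,B) = ∫ P^n(z,w,E×B) π^Y(w,dz)`, as a measure on `F`. -/
def PnY (P : Kernel (E × F) (E × F)) (πY : F → Measure E) (n : ℕ) (w : F) : Measure F :=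
  ((πY w).bind fun z => (kpow P n) (z, w)).map Prod.snd

/-- The one-step filter update
`U(ν,y₀,y₁)(A) = ∫ 1_A(z) g(z',y₀,z,y₁) P₀(z',dz) ν(dz') / (normalization)`. -/
def Ufilt (P₀ : Kernel E E) (g : E → F → E → F → ℝ≥0∞)
    (ν : Measure E) (y₀ y₁ : F) : Measure E :=
  let m : Measure E := ν.bind fun z' => (P₀ z').withDensity fun z => g z' y₀ z y₁
  (m Set.univ)⁻¹ • m

/-- The transition kernel `Γ` of the pair `(Π_n, Y_n)`:
`Γ(ν,y₀,A) = ∫∫ 1_A(U(ν,y₀,y₁),y₁) P(z,y₀,dz',dy₁) ν(dz)` (as a set function). -/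
def GammaFn (P : Kernel (E × F) (E × F)) (P₀ : Kernel E E) (g : E → F → E → F → ℝ≥0∞)
    (ν : Measure E) (y₀ : F) (A : Set (Measure E × F)) : ℝ≥0∞ :=
  ∫⁻ z, ∫⁻ q : E × F, A.indicator 1 (Ufilt P₀ g ν y₀ q.2, q.2) ∂(P (z, y₀)) ∂ν

/-- `m` is a `Γ`-invariant measure. -/
def GammaInvariant (P : Kernel (E × F) (E × F)) (P₀ : Kernel E E)
    (g : E → F → E → F → ℝ≥0∞) (m : Measure (Measure E × F)) : Prop :=
  ∀ A : Set (Measure E × F), MeasurableSet A →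
    ∫⁻ p, GammaFn P P₀ g p.1 p.2 A ∂m = m A

/-- `μ` is the barycenter of `m`: `μ(A×B) = ∫ ν(A) 1_B(w) m(dν,dw)`. -/
def HasBarycenter (m : Measure (Measure E × F)) (μ : Measure (E × F)) : Prop :=
  ∀ A : Set E, ∀ B : Set F, MeasurableSet A → MeasurableSet B →
    ∫⁻ p, p.1 A * B.indicator 1 p.2 ∂m = μ (A ×ˢ B)

/-- The transition kernel `Λ` of the triple `(Π_n, X_n, Y_n)`:
`Λ(ν,x₀,y₀,A) = ∫ 1_A(U(ν,y₀,y₁),x₁,y₁) P(x₀,y₀,dx₁,dy₁)` (as a set function). -/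
def LambdaFn (P : Kernel (E × F) (E × F)) (P₀ : Kernel E E) (g : E → F → E → F → ℝ≥0∞)
    (ν : Measure E) (x₀ : E) (y₀ : F) (A : Set (Measure E × E × F)) : ℝ≥0∞ :=
  ∫⁻ q : E × F, A.indicator 1 (Ufilt P₀ g ν y₀ q.2, q.1, q.2) ∂(P (x₀, y₀))

/-- `M` is a `Λ`-invariant measure. -/
def LambdaInvariant (P : Kernel (E × F) (E × F)) (P₀ : Kernel E E)
    (g : E → F → E → F → ℝ≥0∞) (M : Measure (Measure E × E × F)) : Prop :=
  ∀ A : Set (Measure E × E × F), MeasurableSet A →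
    ∫⁻ p, LambdaFn P P₀ g p.1 p.2.1 p.2.2 A ∂M = M A

/-- `M` has marginal `π` on `E × F`. -/
def HasMarginalPi (M : Measure (Measure E × E × F)) (π : Measure (E × F)) : Prop :=
  ∀ B : Set (E × F), MeasurableSet B →
    M ((fun p : Measure E × E × F => (p.2.1, p.2.2)) ⁻¹' B) = π B

/-- The class `𝔐` of measures `M` on `𝒫(E)×E×F` such that
`M(A×B×C) = ∫ ν(B) 1_{A×C}(ν,w) M(dν,dz,dw)`. -/
def InClassM (M : Measure (Measure E × E × F)) : Prop :=
  ∀ A : Set (Measure E), ∀ B : Set E, ∀ C : Set F,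
    MeasurableSet A → MeasurableSet B → MeasurableSet C →
      M (A ×ˢ B ×ˢ C) = ∫⁻ p, p.1 B * (A ×ˢ C).indicator 1 (p.1, p.2.2) ∂M

/-- `ϖ` is a version of the regular conditional probability `𝐏(X_0 ∈ · | F^Y)`. -/
def IsCondX0FullObs (Plaw : Measure (PathSp E F)) (ϖ : (ℤ → F) → Measure E) : Prop :=
  (∀ y, IsProbabilityMeasure (ϖ y)) ∧
  ∀ A : Set E, MeasurableSet A →
    Measurable (fun y => ϖ y A) ∧
    ∀ B : Set (ℤ → F), MeasurableSet B →
      ∫⁻ y in B, ϖ y A ∂(Plaw.map Prod.snd) = Plaw (Xp 0 ⁻¹' A ∩ Prod.snd ⁻¹' B)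

/-- `ϖ⁺` is a version of the regular conditional probability `𝐏(X_0 ∈ · | F^Y_+)`. -/
def IsCondX0FutureObs (Plaw : Measure (PathSp E F)) (ϖp : (ℤ → F) → Measure E) : Prop :=
  (∀ y, IsProbabilityMeasure (ϖp y)) ∧
  ∀ A : Set E, MeasurableSet A →
    Measurable[sigObsPlus F] (fun y => ϖp y A) ∧
    ∀ B : Set (ℤ → F), MeasurableSet[sigObsPlus F] B →
      ∫⁻ y in B, ϖp y A ∂(Plaw.map Prod.snd) = Plaw (Xp 0 ⁻¹' A ∩ Prod.snd ⁻¹' B)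

/-- `PX` is a version of the conditional transition kernel
`𝐏(X_{n+1} ∈ · | F^X_{≤ n} ∨ F^Y)(ω) = P^X(X_n(ω), Θ^n Y(ω), ·)` of the unobserved
process given the observations (a Markov chain in a random environment). -/
def IsCondKernelPX (Plaw : Measure (PathSp E F)) (PX : E → (ℤ → F) → Measure E) : Prop :=
  (∀ z y, IsProbabilityMeasure (PX z y)) ∧
  Measurable (fun q : E × (ℤ → F) => PX q.1 q.2) ∧
  ∀ (n : ℤ) (A : Set E), MeasurableSet A →
    ∀ S : Set (PathSp E F), MeasurableSet[sigX (Iic n) ⊔ sigY Set.univ] S →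
      ∫⁻ ω in S, PX (Xp n ω) (shiftObs n ω.2) A ∂Plaw = Plaw (S ∩ Xp (n + 1) ⁻¹' A)

/-- The time-`n` law of the conditional (random-environment) chain `𝐏_{z,y}(X_n ∈ ·)`
started at `z` in the environment `y`. -/
def condChainLaw (PX : E → (ℤ → F) → Measure E) : ℕ → E → (ℤ → F) → Measure E
  | 0, z, _ => Measure.dirac z
  | n + 1, z, y => (condChainLaw PX n z y).bind fun x => PX x (shiftObs (n : ℤ) y)

end More

/-! Absolute regularity controls the marginal of `(X_n, Y_n)` under `Plaw^{z,w}`, hence that of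
`X_n`. For the reversed chain, `∫ ‖Plaw^{z,w}((X_{-n},Y_{-n}) ∈ ·) − π‖_TV π(dz,dw)` equals the
total variation distance between the law of `((X_0,Y_0),(X_{-n},Y_{-n}))` and `π ⊗ π`; by
stationarity that law is the swap of the law of `((X_0,Y_0),(X_n,Y_n))`, whose distance to
`π ⊗ π` is in turn the absolute-regularity coefficient at time `n`. The identity
`∫ ‖κ p − ν‖_TV μ(dp) = ‖μ ⊗ κ − μ ⊗ ν‖_TV` needs Hahn sets of `κ p` against `ν` chosen measurably
in `p`, which the Radon–Nikodym derivative of kernels provides. -/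

section TotalVariation

variable {α β γ : Type*} [MeasurableSpace α] [MeasurableSpace β] [MeasurableSpace γ]

lemma tvDist_bddAbove (μ ν : Measure α) [IsFiniteMeasure μ] [IsFiniteMeasure ν] :
    BddAbove (range fun A : {s : Set α // MeasurableSet s} => |μ.real A.1 - ν.real A.1|) := by
  refine ⟨μ.real univ + ν.real univ, ?_⟩
  rintro _ ⟨A, rfl⟩
  have := measureReal_mono (μ := μ) (subset_univ A.1)
  have := measureReal_mono (μ := ν) (subset_univ A.1)
  have := measureReal_nonneg (μ := μ) (s := A.1)
  have := measureReal_nonneg (μ := ν) (s := A.1)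
  rw [abs_sub_le_iff]
  constructor <;> linarith

lemma abs_sub_le_tvDist {μ ν : Measure α} [IsFiniteMeasure μ] [IsFiniteMeasure ν] {A : Set α}
    (hA : MeasurableSet A) : |μ.real A - ν.real A| ≤ tvDist μ ν :=
  le_ciSup (tvDist_bddAbove μ ν) ⟨A, hA⟩

lemma tvDist_nonneg {μ ν : Measure α} [IsFiniteMeasure μ] [IsFiniteMeasure ν] :
    0 ≤ tvDist μ ν :=
  (abs_nonneg _).trans (abs_sub_le_tvDist MeasurableSet.empty)

lemma tvDist_le {μ ν : Measure α} {c : ℝ}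
    (h : ∀ A, MeasurableSet A → |μ.real A - ν.real A| ≤ c) : tvDist μ ν ≤ c :=
  have : Nonempty {s : Set α // MeasurableSet s} := ⟨⟨∅, MeasurableSet.empty⟩⟩
  ciSup_le fun A => h A.1 A.2

lemma tvDist_map_le {f : α → β} (hf : Measurable f) (μ ν : Measure α)
    [IsFiniteMeasure μ] [IsFiniteMeasure ν] : tvDist (μ.map f) (ν.map f) ≤ tvDist μ ν :=
  tvDist_le fun A hA => by
    rw [map_measureReal_apply hf hA, map_measureReal_apply hf hA]
    exact abs_sub_le_tvDist (hf hA)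

lemma tvDist_eq_of_hahn {μ ν : Measure α} [IsProbabilityMeasure μ] [IsProbabilityMeasure ν]
    {s : Set α} (hs : MeasurableSet s) (hpos : ∀ t, MeasurableSet t → t ⊆ s → ν t ≤ μ t)
    (hneg : ∀ t, MeasurableSet t → t ⊆ sᶜ → μ t ≤ ν t) :
    tvDist μ ν = μ.real s - ν.real s := by
  have hreal {ρ ρ' : Measure α} [IsFiniteMeasure ρ'] {t : Set α} (h : ρ t ≤ ρ' t) :
      ρ.real t ≤ ρ'.real t :=
    ENNReal.toReal_mono (measure_ne_top _ _) h
  have hupper : ∀ A, MeasurableSet A → μ.real A - ν.real A ≤ μ.real s - ν.real s := by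
    intro A hA
    have := hreal (hpos _ (hA.inter hs) inter_subset_right)
    have := hreal (hneg _ (hA.diff hs) fun x hx => hx.2)
    have := hreal (hpos _ (hs.diff hA) sdiff_subset)
    have := measureReal_inter_add_sdiff (μ := μ) (s := A) hs
    have := measureReal_inter_add_sdiff (μ := ν) (s := A) hs
    have := measureReal_inter_add_sdiff (μ := μ) (s := s) hA
    have := measureReal_inter_add_sdiff (μ := ν) (s := s) hA
    rw [inter_comm s A] at *
    linarith
  refine le_antisymm (tvDist_le fun A hA => abs_sub_le_iff.2 ⟨hupper A hA, ?_⟩)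
    ((le_abs_self _).trans (abs_sub_le_tvDist hs))
  have := hupper Aᶜ hA.compl
  rw [probReal_compl_eq_one_sub hA, probReal_compl_eq_one_sub hA] at this
  linarith

lemma measureReal_compProd_sub_prod (μ : Measure γ) [IsFiniteMeasure μ] (κ : Kernel γ α)
    [IsMarkovKernel κ] (ν : Measure α) [IsProbabilityMeasure ν] {C : Set (γ × α)}
    (hC : MeasurableSet C) :
    (μ ⊗ₘ κ).real C - (μ.prod ν).real C
      = ∫ p, ((κ p).real (Prod.mk p ⁻¹' C) - ν.real (Prod.mk p ⁻¹' C)) ∂μ := by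
  have hreal (η : Kernel γ α) [IsMarkovKernel η] :
      (μ ⊗ₘ η).real C = ∫ p, (η p).real (Prod.mk p ⁻¹' C) ∂μ := by
    rw [measureReal_def, Measure.compProd_apply hC,
      ← integral_toReal (Kernel.measurable_kernel_prodMk_left hC).aemeasurable
        (ae_of_all _ fun p => measure_lt_top _ _)]
    rfl
  have hint (η : Kernel γ α) [IsMarkovKernel η] :
      Integrable (fun p => (η p).real (Prod.mk p ⁻¹' C)) μ :=
    .of_bound (Kernel.measurable_kernel_prodMk_left hC).ennreal_toReal.aestronglyMeasurable 1
      (ae_of_all _ fun p => by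
        rw [Real.norm_of_nonneg measureReal_nonneg]
        exact measureReal_le_one)
  rw [← Measure.compProd_const, hreal κ, hreal (Kernel.const γ ν),
    ← integral_sub (hint κ) (hint (Kernel.const γ ν))]
  rfl

end TotalVariation

section KernelTotalVariation

variable {α γ : Type*} [MeasurableSpace α] [MeasurableSpace γ]
  [MeasurableSpace.CountableOrCountablyGenerated γ α]

/-- Jointly measurable Hahn sets: compare the densities of `κ p` and `ν` with respect to
`κ p + ν`. -/
lemma exists_measurableSet_tvDist_kernel_eq (κ : Kernel γ α) [IsMarkovKernel κ]
    (ν : Measure α) [IsProbabilityMeasure ν] :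
    ∃ C : Set (γ × α), MeasurableSet C ∧
      ∀ p, tvDist (κ p) ν = (κ p).real (Prod.mk p ⁻¹' C) - ν.real (Prod.mk p ⁻¹' C) := by
  set η := κ + Kernel.const γ ν
  set f := κ.rnDeriv η
  set g := (Kernel.const γ ν).rnDeriv η
  have hf : Measurable fun q : γ × α => f q.1 q.2 := Kernel.measurable_rnDeriv _ _
  have hg : Measurable fun q : γ × α => g q.1 q.2 := Kernel.measurable_rnDeriv _ _
  refine ⟨{q | g q.1 q.2 < f q.1 q.2}, measurableSet_lt hg hf, fun p => ?_⟩
  have hηp : η p = κ p + ν := rfl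
  have hκ {t} (ht : MeasurableSet t) : ∫⁻ x in t, f p x ∂η p = κ p t :=
    Kernel.setLIntegral_rnDeriv (by rw [hηp]; exact .add_right .rfl _) ht
  have hν {t} (ht : MeasurableSet t) : ∫⁻ x in t, g p x ∂η p = ν t :=
    Kernel.setLIntegral_rnDeriv (by rw [hηp]; exact .add_right' .rfl _) ht
  refine tvDist_eq_of_hahn (measurable_prodMk_left (measurableSet_lt hg hf))
    (fun t ht hts => ?_) (fun t ht hts => ?_)
  · rw [← hκ ht, ← hν ht]
    exact setLIntegral_mono (Kernel.measurable_rnDeriv_right _ _ p) fun x hx => (hts hx).le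
  · rw [← hκ ht, ← hν ht]
    exact setLIntegral_mono (Kernel.measurable_rnDeriv_right _ _ p) fun x hx => not_lt.1 (hts hx)

lemma integrable_tvDist_kernel (μ : Measure γ) [IsFiniteMeasure μ] (κ : Kernel γ α)
    [IsMarkovKernel κ] (ν : Measure α) [IsProbabilityMeasure ν] :
    Integrable (fun p => tvDist (κ p) ν) μ := by
  obtain ⟨C, hC, hκν⟩ := exists_measurableSet_tvDist_kernel_eq κ ν
  have hmeas : Measurable fun p => tvDist (κ p) ν := by
    simp_rw [hκν]
    exact (Kernel.measurable_kernel_prodMk_left hC).ennreal_toReal.sub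
      (Kernel.measurable_kernel_prodMk_left (κ := Kernel.const γ ν) hC).ennreal_toReal
  refine .of_bound hmeas.aestronglyMeasurable 1 (ae_of_all _ fun p => ?_)
  rw [Real.norm_of_nonneg tvDist_nonneg, hκν]
  linarith [measureReal_le_one (μ := κ p) (s := Prod.mk p ⁻¹' C),
    measureReal_nonneg (μ := ν) (s := Prod.mk p ⁻¹' C)]

lemma integral_tvDist_kernel_eq_tvDist_compProd (μ : Measure γ) [IsFiniteMeasure μ]
    (κ : Kernel γ α) [IsMarkovKernel κ] (ν : Measure α) [IsProbabilityMeasure ν] :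
    ∫ p, tvDist (κ p) ν ∂μ = tvDist (μ ⊗ₘ κ) (μ.prod ν) := by
  refine le_antisymm ?_ (tvDist_le fun C hC => ?_)
  · obtain ⟨C, hC, hκν⟩ := exists_measurableSet_tvDist_kernel_eq κ ν
    simp_rw [hκν, ← measureReal_compProd_sub_prod μ κ ν hC]
    exact (le_abs_self _).trans (abs_sub_le_tvDist hC)
  · rw [measureReal_compProd_sub_prod μ κ ν hC]
    exact abs_integral_le_integral_abs.trans <| integral_mono_of_nonneg
      (ae_of_all _ fun _ => abs_nonneg _) (integrable_tvDist_kernel μ κ ν)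
      (ae_of_all _ fun p => abs_sub_le_tvDist (measurable_prodMk_left hC))

end KernelTotalVariation

section PathSpace

variable {E F : Type*} [MeasurableSpace E] [MeasurableSpace F]
  {π : Measure (E × F)} {Plaw : Measure (PathSp E F)} {K : Kernel (E × F) (PathSp E F)}

lemma measurable_XYp (m : ℤ) : Measurable (XYp (E := E) (F := F) m) :=
  ((measurable_pi_apply m).comp measurable_fst).prodMk ((measurable_pi_apply m).comp measurable_snd)

lemma measurable_pathShift : Measurable (pathShift (E := E) (F := F)) :=
  (measurable_pi_lambda _ fun n => (measurable_pi_apply (n + 1)).comp measurable_fst).prodMk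
    (measurable_pi_lambda _ fun n => (measurable_pi_apply (n + 1)).comp measurable_snd)

lemma measurable_pair_XYp (a b : ℤ) :
    Measurable fun ω : PathSp E F => (XYp a ω, XYp b ω) :=
  (measurable_XYp a).prodMk (measurable_XYp b)

lemma map_pair_XYp_add (hstat : Plaw.map pathShift = Plaw) (a b k : ℤ) :
    Plaw.map (fun ω => (XYp (a + k) ω, XYp (b + k) ω))
      = Plaw.map (fun ω => (XYp a ω, XYp b ω)) := by
  have hshift (i : ℤ) : (fun ω : PathSp E F => (XYp (a + (i + 1)) ω, XYp (b + (i + 1)) ω))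
      = (fun ω => (XYp (a + i) ω, XYp (b + i) ω)) ∘ pathShift := by
    funext ω
    simp only [XYp, pathShift, Function.comp_apply, add_assoc]
  have hstep (i : ℤ) : Plaw.map (fun ω => (XYp (a + (i + 1)) ω, XYp (b + (i + 1)) ω))
      = Plaw.map (fun ω => (XYp (a + i) ω, XYp (b + i) ω)) := by
    rw [hshift, ← Measure.map_map (measurable_pair_XYp _ _) measurable_pathShift, hstat]
  induction k using Int.induction_on with
  | zero => simp only [add_zero]
  | succ i ih => rw [hstep, ih]
  | pred i ih => rw [← ih, ← hstep, sub_add_cancel]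

lemma map_XYp_eq_of_stationary (hstat : Plaw.map pathShift = Plaw)
    (hmarg : Plaw.map (XYp 0) = π) (m : ℤ) :
    Plaw.map (XYp m) = π := by
  have h := congrArg (Measure.map Prod.fst) (map_pair_XYp_add hstat 0 0 m)
  rw [Measure.map_map measurable_fst (measurable_pair_XYp _ _),
    Measure.map_map measurable_fst (measurable_pair_XYp _ _), zero_add] at h
  exact h.trans hmarg

lemma map_pair_XYp_eq_compProd [MeasurableSingletonClass (E × F)] [SFinite π] [IsMarkovKernel K]
    (hdisint : π.bind (fun p => K p) = Plaw)
    (hstart : ∀ p, K p {ω | XYp 0 ω = p} = 1) (m : ℤ) :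
    Plaw.map (fun ω => (XYp 0 ω, XYp m ω)) = π ⊗ₘ K.map (XYp m) := by
  have hmap_start (p : E × F) : (K p).map (fun ω => (XYp 0 ω, XYp m ω))
      = (K p).map (fun ω => (p, XYp m ω)) := by
    refine Measure.map_congr ?_
    have hstart_ae : ∀ᵐ ω ∂K p, XYp 0 ω = p :=
      (ae_iff_measure_eq (measurable_XYp 0 (measurableSet_singleton p)).nullMeasurableSet).2
        (by rw [measure_univ]; exact hstart p)
    filter_upwards [hstart_ae] with ω hω
    rw [hω]
  ext C hC
  rw [← hdisint, Measure.map_apply (measurable_pair_XYp _ _) hC,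
    Measure.bind_apply (measurable_pair_XYp _ _ hC) K.aemeasurable, Measure.compProd_apply hC]
  refine lintegral_congr fun p => ?_
  rw [← Measure.map_apply (measurable_pair_XYp _ _) hC, hmap_start p,
    Measure.map_apply (measurable_const.prodMk (measurable_XYp m)) hC,
    Kernel.map_apply _ (measurable_XYp m), Measure.map_apply (measurable_XYp m)
      (measurable_prodMk_left hC)]
  rfl

lemma integral_tvDist_map_Xp_le [IsMarkovKernel K] [IsProbabilityMeasure π]
    [MeasurableSpace.CountablyGenerated E] [MeasurableSpace.CountablyGenerated F]
    (hstat : Plaw.map pathShift = Plaw) (hmarg : Plaw.map (XYp 0) = π) (m : ℤ) :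
    ∫ p, tvDist ((K p).map (Xp m)) (Plaw.map (Xp m)) ∂π
      ≤ ∫ p, tvDist ((K p).map (XYp m)) π ∂π := by
  have hfst : Xp m = Prod.fst ∘ XYp (E := E) (F := F) m := rfl
  have hXm : Plaw.map (Xp m) = π.map Prod.fst := by
    rw [hfst, ← Measure.map_map measurable_fst (measurable_XYp m),
      map_XYp_eq_of_stationary hstat hmarg m]
  have := Kernel.IsMarkovKernel.map K (measurable_XYp m)
  have hint := integrable_tvDist_kernel π (K.map (XYp m)) π
  simp only [Kernel.map_apply _ (measurable_XYp m)] at hint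
  rw [hXm]
  refine integral_mono_of_nonneg (ae_of_all _ fun p => tvDist_nonneg) hint
    (ae_of_all _ fun p => ?_)
  dsimp only
  rw [hfst, ← Measure.map_map measurable_fst (measurable_XYp m)]
  exact tvDist_map_le measurable_fst _ _

lemma integral_tvDist_map_XYp_neg_le [IsMarkovKernel K] [IsProbabilityMeasure π]
    [IsProbabilityMeasure Plaw] [MeasurableSingletonClass (E × F)]
    [MeasurableSpace.CountablyGenerated E] [MeasurableSpace.CountablyGenerated F]
    (hstat : Plaw.map pathShift = Plaw) (hdisint : π.bind (fun p => K p) = Plaw)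
    (hstart : ∀ p, K p {ω | XYp 0 ω = p} = 1) (m : ℤ) :
    ∫ p, tvDist ((K p).map (XYp (-m))) π ∂π ≤ ∫ p, tvDist ((K p).map (XYp m)) π ∂π := by
  have := Kernel.IsMarkovKernel.map K (measurable_XYp m)
  have := Kernel.IsMarkovKernel.map K (measurable_XYp (-m))
  simp only [← Kernel.map_apply _ (measurable_XYp _)]
  rw [integral_tvDist_kernel_eq_tvDist_compProd, integral_tvDist_kernel_eq_tvDist_compProd,
    ← map_pair_XYp_eq_compProd hdisint hstart, ← map_pair_XYp_eq_compProd hdisint hstart]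
  have hswap : Plaw.map (fun ω => (XYp 0 ω, XYp (-m) ω))
      = (Plaw.map (fun ω => (XYp 0 ω, XYp m ω))).map Prod.swap := by
    rw [Measure.map_map measurable_swap (measurable_pair_XYp _ _),
      ← map_pair_XYp_add hstat 0 (-m) m, zero_add, neg_add_cancel]
    rfl
  have h := tvDist_map_le measurable_swap (Plaw.map (fun ω => (XYp 0 ω, XYp m ω))) (π.prod π)
  rwa [Measure.prod_swap, ← hswap] at h

end PathSpace

theorem absolutely_regular_implies_marginal_ergodicity_general
    {E F : Type*}
    [MeasurableSpace E] [TopologicalSpace E] [PolishSpace E] [BorelSpace E]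
    [MeasurableSpace F] [TopologicalSpace F] [PolishSpace F] [BorelSpace F]
    (P P' : Kernel (E × F) (E × F))
    (π : Measure (E × F)) [IsProbabilityMeasure π]
    (Plaw : Measure (PathSp E F)) (K : Kernel (E × F) (PathSp E F)) [IsMarkovKernel K]
    (hsetup : CanonicalSetup P P' π Plaw K)
    (habsreg : Tendsto (fun n : ℕ =>
        ∫ p, tvDist ((K p).map (XYp (n : ℤ))) π ∂π) atTop (nhds 0)) :
    MarginalErgodic π Plaw K ∧ RevMarginalErgodic π Plaw K := by
  have := hsetup.prob
  have hX (m : ℤ) := integral_tvDist_map_Xp_le (K := K) hsetup.stationary hsetup.marginal m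
  have hnonneg (m : ℤ) : 0 ≤ ∫ p, tvDist ((K p).map (Xp m)) (Plaw.map (Xp m)) ∂π :=
    integral_nonneg fun p => tvDist_nonneg
  refine ⟨squeeze_zero (fun n => hnonneg n) (fun n => hX n) habsreg,
    squeeze_zero (fun n => hnonneg _) (fun n => (hX _).trans ?_) habsreg⟩
  exact integral_tvDist_map_XYp_neg_le hsetup.stationary hsetup.disint hsetup.start n

theorem absolutely_regular_implies_marginal_ergodicity
    {E F : Type*}
    [MeasurableSpace E] [TopologicalSpace E] [PolishSpace E] [BorelSpace E]
    [MeasurableSpace F] [TopologicalSpace F] [PolishSpace F] [BorelSpace F]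
    (P P' : Kernel (E × F) (E × F)) [IsMarkovKernel P] [IsMarkovKernel P']
    (π : Measure (E × F)) [IsProbabilityMeasure π]
    (hπinv : π.bind (fun p => P p) = π)
    (Plaw : Measure (PathSp E F)) (K : Kernel (E × F) (PathSp E F)) [IsMarkovKernel K]
    (hsetup : CanonicalSetup P P' π Plaw K)
    (habsreg : Tendsto (fun n : ℕ =>
        ∫ p, tvDist ((K p).map (XYp (n : ℤ))) π ∂π) atTop (nhds 0)) :
    MarginalErgodic π Plaw K ∧ RevMarginalErgodic π Plaw K :=
  absolutely_regular_implies_marginal_ergodicity_general P P' π Plaw K hsetup habsreg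
end
end

section
/- Suppose the nondegeneracy assumption holds. Then for every n∈ℕ there exists a strictly positive measurable function G_n : E×F×E×F → (0,∞) such that the n-step kernel factorizes as P^n(z,w,dz',dw') = G_n(z,w,z',w') P_n^X(z,dz') P_n^Y(w,dw'). -/
open MeasureTheory ProbabilityTheory Filter Set
open scoped ENNReal

noncomputable section

/-!
Write `μ ∼ ν` for mutual absolute continuity. It is preserved by products, by images, and by
composition with fiberwise equivalent kernels. Inductively `P^n(z,w) ∼ P_n^X(z) ⊗ P_n^Y(w)`:
`P^{n+1}(z,w) ∼ (P_n^X(z) ⊗ P_n^Y(w))(P₀ ⊗ Q) = P_n^X(z)P₀ ⊗ P_n^Y(w)Q`, and since this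
holds for every `w`, its `X`-marginal averaged over `π^X(z,dw)` gives
`P_{n+1}^X(z) ∼ P_n^X(z)P₀`; likewise `P_{n+1}^Y(w) ∼ P_n^Y(w)Q`. As `E × F` is countably
generated, the Radon–Nikodym derivative of `P^n` with respect to the product kernel can be
chosen jointly measurable, which gives `G_n`.
-/

namespace MeasureTheory.Measure

variable {α β γ δ : Type*} [MeasurableSpace α] [MeasurableSpace β] [MeasurableSpace γ]
  [MeasurableSpace δ]

def Equivalent (μ ν : Measure α) : Prop := μ ≪ ν ∧ ν ≪ μ

namespace Equivalent

variable {μ ν ρ : Measure α}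

lemma refl (μ : Measure α) : Equivalent μ μ := ⟨.rfl, .rfl⟩

lemma symm (h : Equivalent μ ν) : Equivalent ν μ := ⟨h.2, h.1⟩

lemma trans (h₁ : Equivalent μ ν) (h₂ : Equivalent ν ρ) : Equivalent μ ρ :=
  ⟨h₁.1.trans h₂.1, h₂.2.trans h₁.2⟩

lemma map (h : Equivalent μ ν) {f : α → β} (hf : Measurable f) :
    Equivalent (μ.map f) (ν.map f) :=
  ⟨h.1.map hf, h.2.map hf⟩

lemma prod {μ' ν' : Measure β} [SFinite μ'] [SFinite ν'] (h : Equivalent μ ν)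
    (h' : Equivalent μ' ν') : Equivalent (μ.prod μ') (ν.prod ν') :=
  ⟨h.1.prod h'.1, h.2.prod h'.2⟩

lemma comp (h : Equivalent μ ν) {κ η : Kernel α β} (hκη : ∀ a, Equivalent (κ a) (η a)) :
    Equivalent (κ ∘ₘ μ) (η ∘ₘ ν) :=
  ⟨AbsolutelyContinuous.comp h.1 (.of_forall fun a => (hκη a).1),
    AbsolutelyContinuous.comp h.2 (.of_forall fun a => (hκη a).2)⟩

end Equivalent

lemma withDensity_equivalent (μ : Measure α) {f : α → ℝ≥0∞} (hf : Measurable f)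
    (hpos : ∀ a, f a ≠ 0) : Equivalent (μ.withDensity f) μ :=
  ⟨withDensity_absolutelyContinuous μ f,
    withDensity_absolutelyContinuous' hf.aemeasurable (.of_forall hpos)⟩

lemma comp_equivalent_of_forall {μ : Measure α} [IsProbabilityMeasure μ] {κ : Kernel α β}
    {m : Measure β} (h : ∀ a, Equivalent (κ a) m) : Equivalent (κ ∘ₘ μ) m := by
  simpa using (Equivalent.refl μ).comp (η := Kernel.const α m) h

lemma fst_comp_equivalent_of_forall {μ : Measure α} [IsProbabilityMeasure μ]
    {κ : Kernel α (β × γ)} {m : Measure β} {ν : α → Measure γ}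
    [∀ a, IsProbabilityMeasure (ν a)] (h : ∀ a, Equivalent (κ a) (m.prod (ν a))) :
    Equivalent (κ.fst ∘ₘ μ) m :=
  comp_equivalent_of_forall fun a => by
    simpa [Kernel.fst_apply] using (h a).map measurable_fst

lemma snd_comp_equivalent_of_forall {μ : Measure α} [IsProbabilityMeasure μ]
    {κ : Kernel α (β × γ)} {m : Measure γ} [SFinite m] {ν : α → Measure β}
    [∀ a, IsProbabilityMeasure (ν a)] (h : ∀ a, Equivalent (κ a) ((ν a).prod m)) :
    Equivalent (κ.snd ∘ₘ μ) m :=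
  comp_equivalent_of_forall fun a => by
    simpa [Kernel.snd_apply] using (h a).map measurable_snd

lemma parallelComp_comp_prod (μ : Measure α) [SFinite μ] (ν : Measure β) [SFinite ν]
    (κ : Kernel α γ) [IsSFiniteKernel κ] (η : Kernel β δ) [IsSFiniteKernel η] :
    (κ ∥ₖ η) ∘ₘ (μ.prod ν) = (κ ∘ₘ μ).prod (η ∘ₘ ν) := by
  simpa [Kernel.comp_apply, Kernel.prod_apply] using
    DFunLike.congr_fun (Kernel.parallelComp_comp_prod (κ := Kernel.const Unit μ) (η := κ)
      (κ' := Kernel.const Unit ν) (η' := η)) ()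

end MeasureTheory.Measure

namespace ProbabilityTheory.Kernel

variable {α β γ : Type*} [MeasurableSpace α] [MeasurableSpace β] [MeasurableSpace γ]

lemma snd_compProd_apply (ξ : Kernel α β) [IsSFiniteKernel ξ] (κ : Kernel (α × β) γ)
    [IsSFiniteKernel κ] (a : α) :
    (ξ ⊗ₖ κ).snd a = κ.comap (Prod.mk a) measurable_prodMk_left ∘ₘ ξ a := by
  ext s hs
  rw [snd_apply' _ _ hs, compProd_apply (measurable_snd hs),
    Measure.bind_apply hs (Kernel.aemeasurable _)]
  rfl

lemma exists_density_pos_lt_top_of_equivalent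
    [MeasurableSpace.CountableOrCountablyGenerated α γ] {κ η : Kernel α γ}
    [IsFiniteKernel κ] [IsFiniteKernel η]
    (h : ∀ a, (κ a).Equivalent (η a)) :
    ∃ G : α → γ → ℝ≥0∞, Measurable (Function.uncurry G) ∧ (∀ a c, G a c ∈ Ioo 0 ∞) ∧
      ∀ a, κ a = (η a).withDensity (G a) := by
  have hr : Measurable (Function.uncurry (κ.rnDeriv η)) := κ.measurable_rnDeriv η
  -- `rnDeriv κ η a` lies in `(0, ∞)` only `η a`-almost everywhere; elsewhere replace it by `1`
  refine ⟨fun a c => if κ.rnDeriv η a c ∈ Ioo 0 ∞ then κ.rnDeriv η a c else 1,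
    Measurable.ite (hr (measurableSet_Ioo (a := 0) (b := ∞))) hr measurable_const,
    fun a c => ?_, fun a => ?_⟩
  · dsimp only
    split_ifs with hc
    exacts [hc, ⟨one_pos, ENNReal.one_lt_top⟩]
  · rw [← withDensity_rnDeriv_eq (h a).1, Kernel.withDensity_apply _ (κ.measurable_rnDeriv η)]
    refine MeasureTheory.withDensity_congr_ae ?_
    filter_upwards [κ.rnDeriv_lt_top η, (rnDeriv_pos (h a).1).filter_mono (h a).2.ae_le]
      with c hlt hpos
    rw [if_pos ⟨hpos, hlt⟩]

end ProbabilityTheory.Kernel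

section IteratedKernel

variable {α : Type*} [MeasurableSpace α]

instance isSFiniteKernel_kpow (κ : Kernel α α) [IsSFiniteKernel κ] (n : ℕ) :
    IsSFiniteKernel (kpow κ n) := by
  induction n with
  | zero => exact inferInstanceAs (IsSFiniteKernel Kernel.id)
  | succ n ih => exact inferInstanceAs (IsSFiniteKernel (kpow κ n ∘ₖ κ))

instance isMarkovKernel_kpow (κ : Kernel α α) [IsMarkovKernel κ] (n : ℕ) :
    IsMarkovKernel (kpow κ n) := by
  induction n with
  | zero => exact inferInstanceAs (IsMarkovKernel Kernel.id)
  | succ n ih => exact inferInstanceAs (IsMarkovKernel (kpow κ n ∘ₖ κ))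

lemma kpow_succ' (κ : Kernel α α) (n : ℕ) : kpow κ (n + 1) = κ ∘ₖ kpow κ n := by
  induction n with
  | zero => exact (Kernel.id_comp κ).trans (Kernel.comp_id κ).symm
  | succ n ih =>
    change kpow κ (n + 1) ∘ₖ κ = κ ∘ₖ (kpow κ n ∘ₖ κ)
    rw [ih, Kernel.comp_assoc]

end IteratedKernel

section MarginalKernels

variable {E F : Type*} [MeasurableSpace E] [MeasurableSpace F]

lemma measProd_eq_prod (μ : Measure E) (ν : Measure F) : measProd μ ν = μ.prod ν :=
  (Measure.prod_def μ ν).symm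

lemma Nondeg.equivalent_parallelComp {P : Kernel (E × F) (E × F)} {P₀ : Kernel E E}
    {Q : Kernel F F} {g : E → F → E → F → ℝ≥0∞} (hnd : Nondeg P P₀ Q g) (p : E × F) :
    (P p).Equivalent ((P₀ ∥ₖ Q) p) := by
  have := hnd.markovP₀
  have := hnd.markovQ
  rw [hnd.eq p, measProd_eq_prod, Kernel.parallelComp_apply]
  exact Measure.withDensity_equivalent _ (hnd.meas.comp measurable_prodMk_left)
    fun q => (hnd.pos _ _ _ _).ne'

variable (P : Kernel (E × F) (E × F))

lemma PnX_eq_comp (ξ : Kernel E F) (n : ℕ) (z : E) :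
    PnX P ξ n z = ((kpow P n).comap (Prod.mk z) measurable_prodMk_left).fst ∘ₘ ξ z := by
  rw [Kernel.fst_eq]
  exact Measure.map_comp (ξ z) ((kpow P n).comap (Prod.mk z) measurable_prodMk_left)
    measurable_fst

lemma PnY_eq_comp (ξ : Kernel F E) (n : ℕ) (w : F) :
    PnY P ξ n w = ((kpow P n).comap (·, w) measurable_prodMk_right).snd ∘ₘ ξ w := by
  rw [Kernel.snd_eq]
  exact Measure.map_comp (ξ w) ((kpow P n).comap (·, w) measurable_prodMk_right)
    measurable_snd

lemma PnX_zero (ξ : Kernel E F) [IsMarkovKernel ξ] (z : E) :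
    PnX P ξ 0 z = Measure.dirac z := by
  have : ((kpow P 0).comap (Prod.mk z) measurable_prodMk_left).fst =
      Kernel.const F (Measure.dirac z) := by
    ext w : 1
    simp [Kernel.fst_apply, kpow, Kernel.deterministic_apply,
      Measure.map_dirac' measurable_fst]
  rw [PnX_eq_comp, this]
  simp

lemma PnY_zero (ξ : Kernel F E) [IsMarkovKernel ξ] (w : F) :
    PnY P ξ 0 w = Measure.dirac w := by
  have : ((kpow P 0).comap (·, w) measurable_prodMk_right).snd =
      Kernel.const E (Measure.dirac w) := by
    ext z : 1
    simp [Kernel.snd_apply, kpow, Kernel.deterministic_apply,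
      Measure.map_dirac' measurable_snd]
  rw [PnY_eq_comp, this]
  simp

variable [IsSFiniteKernel P]

lemma PnX_eq_fst_snd_compProd (ξ : Kernel E F) [IsSFiniteKernel ξ] (n : ℕ) (z : E) :
    PnX P ξ n z = (ξ ⊗ₖ kpow P n).snd.fst z := by
  rw [Kernel.fst_apply, Kernel.snd_compProd_apply]
  rfl

lemma PnY_eq_snd_snd_compProd (ξ : Kernel F E) [IsSFiniteKernel ξ] (n : ℕ) (w : F) :
    PnY P ξ n w = (ξ ⊗ₖ (kpow P n).comap Prod.swap measurable_swap).snd.snd w := by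
  rw [Kernel.snd_apply, Kernel.snd_compProd_apply]
  rfl

variable [IsMarkovKernel P]

instance isProbabilityMeasure_PnX (ξ : Kernel E F) [IsMarkovKernel ξ] (n : ℕ) (z : E) :
    IsProbabilityMeasure (PnX P ξ n z) := by
  rw [PnX_eq_comp]
  infer_instance

instance isProbabilityMeasure_PnY (ξ : Kernel F E) [IsMarkovKernel ξ] (n : ℕ) (w : F) :
    IsProbabilityMeasure (PnY P ξ n w) := by
  rw [PnY_eq_comp]
  infer_instance

end MarginalKernels

lemma kpow_equivalent_PnX_prod_PnY {E F : Type*} [MeasurableSpace E] [MeasurableSpace F]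
    {P : Kernel (E × F) (E × F)} [IsMarkovKernel P] {P₀ : Kernel E E} [IsMarkovKernel P₀]
    {Q : Kernel F F} [IsMarkovKernel Q] (hP : ∀ p, (P p).Equivalent ((P₀ ∥ₖ Q) p))
    (ξX : Kernel E F) [IsMarkovKernel ξX] (ξY : Kernel F E) [IsMarkovKernel ξY] (n : ℕ) :
    ∀ z w, (kpow P n (z, w)).Equivalent ((PnX P ξX n z).prod (PnY P ξY n w)) := by
  induction n with
  | zero =>
    intro z w
    rw [PnX_zero, PnY_zero, Measure.dirac_prod_dirac]
    exact .refl _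
  | succ n ih =>
    have hstep : ∀ z w, (kpow P (n + 1) (z, w)).Equivalent
        ((P₀ ∘ₘ PnX P ξX n z).prod (Q ∘ₘ PnY P ξY n w)) := fun z w => by
      rw [kpow_succ', Kernel.comp_apply, ← Measure.parallelComp_comp_prod]
      exact (ih z w).comp hP
    intro z w
    rw [PnX_eq_comp, PnY_eq_comp]
    exact (hstep z w).trans ((Measure.fst_comp_equivalent_of_forall (hstep z)).symm.prod
      (Measure.snd_comp_equivalent_of_forall (hstep · w)).symm)

theorem iterated_kernel_nondegenerate_general
    {E F : Type*}
    [MeasurableSpace E] [TopologicalSpace E] [PolishSpace E] [BorelSpace E]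
    [MeasurableSpace F] [TopologicalSpace F] [PolishSpace F] [BorelSpace F]
    (P : Kernel (E × F) (E × F)) [IsMarkovKernel P]
    (π : Measure (E × F))
    (P₀ : Kernel E E) (Q : Kernel F F) (g : E → F → E → F → ℝ≥0∞)
    (hnd : Nondeg P P₀ Q g)
    (πX : E → Measure F) (hπX : IsCondYgivenX π πX)
    (πY : F → Measure E) (hπY : IsCondXgivenY π πY)
    :
    ∀ n : ℕ, ∃ G : E → F → E → F → ℝ≥0∞,
      (Measurable fun q : (E × F) × E × F => G q.1.1 q.1.2 q.2.1 q.2.2) ∧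
      (∀ z w z' w', 0 < G z w z' w' ∧ G z w z' w' < ⊤) ∧
      ∀ (z : E) (w : F), (kpow P n) (z, w) =
        (measProd (PnX P πX n z) (PnY P πY n w)).withDensity fun q => G z w q.1 q.2 := by
  intro n
  have := hnd.markovP₀
  have := hnd.markovQ
  let ξX : Kernel E F :=
    ⟨πX, Measure.measurable_of_measurable_coe _ fun B hB => (hπX.2 B hB).1⟩
  let ξY : Kernel F E :=
    ⟨πY, Measure.measurable_of_measurable_coe _ fun A hA => (hπY.2 A hA).1⟩
  have : IsMarkovKernel ξX := ⟨hπX.1⟩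
  have : IsMarkovKernel ξY := ⟨hπY.1⟩
  have hmarg : ∀ z w, ((ξX ⊗ₖ kpow P n).snd.fst ∥ₖ
      (ξY ⊗ₖ (kpow P n).comap Prod.swap measurable_swap).snd.snd) (z, w) =
      (PnX P ξX n z).prod (PnY P ξY n w) := fun z w => by
    rw [Kernel.parallelComp_apply, PnX_eq_fst_snd_compProd, PnY_eq_snd_snd_compProd]
  obtain ⟨G, hGm, hGpos, hG⟩ :=
    Kernel.exists_density_pos_lt_top_of_equivalent (κ := kpow P n) fun ((z, w) : E × F) => by
      rw [hmarg]
      exact kpow_equivalent_PnX_prod_PnY hnd.equivalent_parallelComp ξX ξY n z w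
  refine ⟨fun z w z' w' => G (z, w) (z', w'), hGm, fun z w z' w' => hGpos _ _, fun z w => ?_⟩
  rw [hG, hmarg, measProd_eq_prod]
  rfl

theorem iterated_kernel_nondegenerate
    {E F : Type*}
    [MeasurableSpace E] [TopologicalSpace E] [PolishSpace E] [BorelSpace E]
    [MeasurableSpace F] [TopologicalSpace F] [PolishSpace F] [BorelSpace F]
    (P : Kernel (E × F) (E × F)) [IsMarkovKernel P]
    (π : Measure (E × F)) [IsProbabilityMeasure π]
    (hπinv : π.bind (fun p => P p) = π)
    (P₀ : Kernel E E) (Q : Kernel F F) (g : E → F → E → F → ℝ≥0∞)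
    (hnd : Nondeg P P₀ Q g)
    (πX : E → Measure F) (hπX : IsCondYgivenX π πX)
    (πY : F → Measure E) (hπY : IsCondXgivenY π πY)
    :
    ∀ n : ℕ, ∃ G : E → F → E → F → ℝ≥0∞,
      (Measurable fun q : (E × F) × E × F => G q.1.1 q.1.2 q.2.1 q.2.2) ∧
      (∀ z w z' w', 0 < G z w z' w' ∧ G z w z' w' < ⊤) ∧
      ∀ (z : E) (w : F), (kpow P n) (z, w) =
        (measProd (PnX P πX n z) (PnY P πY n w)).withDensity fun q => G z w q.1 q.2 :=
  iterated_kernel_nondegenerate_general P π P₀ Q g hnd πX hπX πY hπY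

end
end
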